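/- The sequence Z = 2 1 0 2 0 1 2 ⋯ of lengths of the blocks of 1's between consecutive 0's in the Thue–Morse sequence is the iterative fixed point of the morphism σ: 2 → 210, 1 → 20, 0 → 1 beginning with 2, and σ is non-uniform. -/

import Mathlib

/-!
Code a letter `k` of `Z` by the block `0 1^k` of `t`. Then the block code intertwines `σ` with
the Thue–Morse morphism: `block (σ k) = μ (block k)` letter by letter. Hence `block (σ^n 2)`
is `μ^n 011`, and since `μ^{n+2} 0 = μ^n 011 · μ^n 0` with `μ^n 0` starting with `0`, the word
`block (σ^n 2) · 0` is a prefix of `t`. Reading such a prefix of `t` block by block, between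
consecutive zeros, recovers a prefix of `Z`.
-/

/-- Extension of a substitution `φ : A → B*` to finite words. -/
def wordMap {A B : Type} (φ : A → List B) (w : List A) : List B := w.flatMap φ

/-- `n`-fold iteration of a morphism applied to a word. -/
def iterWord {A : Type} (φ : A → List A) (n : ℕ) (w : List A) : List A :=
  (wordMap φ)^[n] w

/-- A morphism is `k`-uniform if every letter has image of length `k`. -/
def Uniform {A : Type} (k : ℕ) (φ : A → List A) : Prop := ∀ a, (φ a).length = k

/-- The finite word `w` is a prefix of the infinite sequence `s`. -/
def PrefixSeq {A : Type} (w : List A) (s : ℕ → A) : Prop :=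
  ∀ i, i < w.length → w[i]? = some (s i)

/-- `φ` is prolongable on `a₀`: `φ(a₀) = a₀ x` with `x` nonempty and iterates of `x` never empty. -/
def Prolongable {A : Type} (φ : A → List A) (a₀ : A) : Prop :=
  ∃ x : List A, x ≠ [] ∧ φ a₀ = a₀ :: x ∧ ∀ ℓ, iterWord φ ℓ x ≠ []

/-- `s` is the iterative fixed point of `φ` beginning with `a₀`:
`φ` is prolongable on `a₀` and every iterate `φ^n(a₀)` is a prefix of `s`
(their lengths tend to infinity thanks to prolongability, so `s` is determined). -/
def IsIterFix {A : Type} (φ : A → List A) (a₀ : A) (s : ℕ → A) : Prop :=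
  Prolongable φ a₀ ∧ ∀ n, PrefixSeq (iterWord φ n [a₀]) s

/-- `s` is ultimately periodic. -/
def UltimatelyPeriodic {A : Type} (s : ℕ → A) : Prop :=
  ∃ N p : ℕ, 1 ≤ p ∧ ∀ n, N ≤ n → s (n + p) = s n

/-- The extension of `φ` to infinite sequences fixes `s`: for every `m`,
the image of the length-`m` prefix of `s` is again a prefix of `s`. -/
def SeqFixedPoint {A : Type} (φ : A → List A) (s : ℕ → A) : Prop :=
  ∀ m, PrefixSeq (wordMap φ ((List.range m).map s)) s

/-- The Thue–Morse morphism `0 ↦ 01`, `1 ↦ 10` (with `0 := false`, `1 := true`). -/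
def mu : Bool → List Bool
  | false => [false, true]
  | true => [true, false]

/-- The morphism `σ : 0 ↦ 1, 1 ↦ 20, 2 ↦ 210` on `{0,1,2}`. -/
def sigma : Fin 3 → List (Fin 3) := ![[1], [2, 0], [2, 1, 0]]

section Words

variable {A B : Type}

@[simp] lemma wordMap_nil (φ : A → List B) : wordMap φ [] = [] := rfl

@[simp] lemma wordMap_cons (φ : A → List B) (a : A) (w : List A) :
    wordMap φ (a :: w) = φ a ++ wordMap φ w :=
  List.flatMap_cons

@[simp] lemma wordMap_append (φ : A → List B) (u v : List A) :
    wordMap φ (u ++ v) = wordMap φ u ++ wordMap φ v :=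
  List.flatMap_append

lemma wordMap_singleton (φ : A → List B) (a : A) : wordMap φ [a] = φ a := by
  simp

lemma wordMap_semiconj {φ : A → List A} {ψ : B → List B} {χ : A → List B}
    (h : ∀ a, wordMap χ (φ a) = wordMap ψ (χ a)) :
    Function.Semiconj (wordMap χ) (wordMap φ) (wordMap ψ) := by
  intro w
  induction w with
  | nil => rfl
  | cons a w ih => simp only [wordMap_cons, wordMap_append, h, ih]

lemma iterWord_append (φ : A → List A) (n : ℕ) (u v : List A) :
    iterWord φ n (u ++ v) = iterWord φ n u ++ iterWord φ n v := by
  induction n generalizing u v with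
  | zero => rfl
  | succ n ih =>
    simp only [iterWord, Function.iterate_succ_apply, wordMap_append] at ih ⊢
    exact ih _ _

lemma iterWord_ne_nil {φ : A → List A} (hφ : ∀ a, φ a ≠ []) {w : List A} (hw : w ≠ [])
    (n : ℕ) : iterWord φ n w ≠ [] := by
  induction n with
  | zero => exact hw
  | succ n ih =>
    obtain ⟨a, v, hv⟩ := List.exists_cons_of_ne_nil ih
    rw [iterWord, Function.iterate_succ_apply', ← iterWord, hv, wordMap_cons]
    exact List.append_ne_nil_of_left_ne_nil (hφ a) _

lemma exists_iterWord_singleton_eq_cons {φ : A → List A} {a : A} {x : List A}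
    (h : φ a = a :: x) (n : ℕ) : ∃ y, iterWord φ n [a] = a :: y := by
  induction n with
  | zero => exact ⟨[], rfl⟩
  | succ n ih =>
    obtain ⟨y, hy⟩ := ih
    refine ⟨x ++ wordMap φ y, ?_⟩
    rw [iterWord, Function.iterate_succ_apply', ← iterWord, hy, wordMap_cons, h,
      List.cons_append]

@[simp] lemma prefixSeq_nil (s : ℕ → A) : PrefixSeq [] s := fun _ h => absurd h (by simp)

lemma prefixSeq_append {u v : List A} {s : ℕ → A} :
    PrefixSeq (u ++ v) s ↔ PrefixSeq u s ∧ PrefixSeq v (fun i => s (u.length + i)) := by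
  refine ⟨fun h => ⟨fun i hi => ?_, fun i hi => ?_⟩, fun ⟨hu, hv⟩ i hi => ?_⟩
  · simpa [List.getElem?_append_left hi] using h i (by simp; omega)
  · simpa [List.getElem?_append_right] using h (u.length + i) (by simp; omega)
  · rcases lt_or_ge i u.length with hiu | hiu
    · simpa [List.getElem?_append_left hiu] using hu i hiu
    · obtain ⟨j, rfl⟩ := Nat.exists_eq_add_of_le hiu
      simpa [List.getElem?_append_right] using hv j (by simp at hi; omega)

lemma prefixSeq_cons {a : A} {v : List A} {s : ℕ → A} :
    PrefixSeq (a :: v) s ↔ s 0 = a ∧ PrefixSeq v (fun i => s (i + 1)) := by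
  rw [← List.singleton_append, prefixSeq_append]
  simp only [List.length_singleton, Nat.add_comm 1]
  refine and_congr_left fun _ => ⟨fun h => ?_, fun h i hi => ?_⟩
  · simpa [eq_comm] using h 0 (by simp)
  · simp_all [eq_comm]

lemma prefixSeq_replicate {n : ℕ} {a : A} {s : ℕ → A} :
    PrefixSeq (List.replicate n a) s ↔ ∀ i < n, s i = a := by
  simp only [PrefixSeq, List.length_replicate, List.getElem?_replicate]
  exact forall₂_congr fun i hi => by simp [hi, eq_comm]

end Words

lemma sigma_prolongable : Prolongable sigma 2 :=
  ⟨[1, 0], by simp, rfl, iterWord_ne_nil (by decide) (by simp)⟩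

lemma sigma_not_uniform : ¬ ∃ m, Uniform m sigma := by
  rintro ⟨m, hm⟩
  exact absurd ((hm 0).trans (hm 2).symm) (by decide)

lemma prefixSeq_iterWord_mu {t : ℕ → Bool} (ht : IsIterFix mu false t) (n : ℕ) :
    PrefixSeq (iterWord mu n [false, true, true] ++ [false]) t := by
  obtain ⟨y, hy⟩ := exists_iterWord_singleton_eq_cons (φ := mu) (a := false) rfl n
  have h := ht.2 (n + 2)
  rw [iterWord, Function.iterate_add_apply, ← iterWord, ← iterWord,
    show iterWord mu 2 [false] = [false, true, true] ++ [false] from rfl, iterWord_append, hy,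
    prefixSeq_append, prefixSeq_cons] at h
  rw [prefixSeq_append, prefixSeq_cons]
  exact ⟨h.1, h.2.1, prefixSeq_nil _⟩

def block (k : Fin 3) : List Bool := false :: List.replicate k true

lemma wordMap_block_iterWord_sigma (n : ℕ) (w : List (Fin 3)) :
    wordMap block (iterWord sigma n w) = iterWord mu n (wordMap block w) :=
  (wordMap_semiconj (by decide)).iterate_right n w

section Decoding

variable {t : ℕ → Bool} {zeros : ℕ → ℕ} (hmono : StrictMono zeros)
  (hz : ∀ i, t (zeros i) = false) (hall : ∀ n, t n = false → ∃ i, zeros i = n)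
include hmono hall

lemma zeros_zero (h : t 0 = false) : zeros 0 = 0 := by
  obtain ⟨i, hi⟩ := hall 0 h
  have := hmono.monotone (Nat.zero_le i)
  omega

include hz in
lemma zeros_succ {m n : ℕ} (hmn : zeros m < n) (hn : t n = false)
    (hones : ∀ j, zeros m < j → j < n → t j = true) : zeros (m + 1) = n := by
  obtain ⟨i, rfl⟩ := hall n hn
  have hle : zeros (m + 1) ≤ zeros i := hmono.monotone (hmono.lt_iff_lt.1 hmn)
  refine hle.antisymm (not_lt.1 fun hlt => ?_)
  have := hones _ (hmono (Nat.lt_succ_self m)) hlt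
  rw [hz] at this
  exact Bool.false_ne_true this

include hz in
lemma prefixSeq_of_prefixSeq_wordMap_block {Z : ℕ → Fin 3}
    (hZ : ∀ i, (Z i : ℕ) = zeros (i + 1) - zeros i - 1) (W : List (Fin 3))
    (h : PrefixSeq (wordMap block W ++ [false]) t) :
    PrefixSeq W Z ∧ zeros W.length = (wordMap block W).length := by
  induction W using List.reverseRecOn with
  | nil =>
    simp only [wordMap_nil, List.nil_append, prefixSeq_cons] at h
    exact ⟨prefixSeq_nil Z, zeros_zero hmono hall h.1⟩
  | append_singleton W k ih =>
    simp only [wordMap_append, wordMap_singleton, block, List.append_assoc, List.cons_append,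
      prefixSeq_append, prefixSeq_cons, prefixSeq_replicate, List.length_replicate] at h
    obtain ⟨hW, hL, hones, hend, -⟩ := h
    set L := (wordMap block W).length
    obtain ⟨hWZ, hzW⟩ := ih (prefixSeq_append.2 ⟨hW, prefixSeq_cons.2 ⟨hL, prefixSeq_nil _⟩⟩)
    have hsucc : zeros (W.length + 1) = L + k + 1 := by
      refine zeros_succ hmono hz hall (by omega) (by simpa [Nat.add_assoc] using hend)
        fun j hj hj' => ?_
      simpa [show L + (j - L - 1 + 1) = j by omega] using hones (j - L - 1) (by omega)
    have hZk : Z W.length = k := Fin.ext (by rw [hZ]; omega)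
    refine ⟨prefixSeq_append.2 ⟨hWZ, prefixSeq_cons.2 ⟨by simpa using hZk, prefixSeq_nil _⟩⟩, ?_⟩
    rw [List.length_append, List.length_singleton, hsucc]
    simp only [wordMap_append, wordMap_singleton, block, List.length_append, List.length_cons,
      List.length_replicate]
    omega

end Decoding

theorem stmt16 (t : ℕ → Bool) (ht : IsIterFix mu false t)
    (zeros : ℕ → ℕ) (hmono : StrictMono zeros)
    (hz : ∀ i, t (zeros i) = false)
    (hall : ∀ n, t n = false → ∃ i, zeros i = n)
    (Z : ℕ → Fin 3)
    (hZ : ∀ i, (Z i : ℕ) = zeros (i + 1) - zeros i - 1) :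
    IsIterFix sigma 2 Z ∧ ¬ ∃ m, Uniform m sigma := by
  refine ⟨⟨sigma_prolongable, fun n => ?_⟩, sigma_not_uniform⟩
  have hprefix : PrefixSeq (wordMap block (iterWord sigma n [2]) ++ [false]) t := by
    rw [wordMap_block_iterWord_sigma]
    exact prefixSeq_iterWord_mu ht n
  exact (prefixSeq_of_prefixSeq_wordMap_block hmono hz hall hZ _ hprefix).1
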